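/- Let M be an A-module algebra over a weak *-Hopf algebra A, with crossed product M⋊A and fixed point algebra N = M^A. Then: (i) (a▷m)⋊1 = Σ (1⋊a₍₁₎)·(m⋊1)·(1⋊S(a₍₂₎)) for all a ∈ A and m ∈ M; (ii) (1⋊a)·(n⋊1) = (n⋊1)·(1⋊a) for all a ∈ A and n ∈ N; (iii) (1⋊a)·(m⋊1) = (m⋊1)·(1⋊a) for all a ∈ A_R and m ∈ M; (iv) 1⋊a is central in M⋊A for every a ∈ A_R∩C(A), and lies in (M⋊1)∩C(M⋊A) for every a ∈ A_L∩A_R∩C(A); (v) under the embedding m ↦ m⋊1 one has {m ∈ M : m⋊1 ∈ C(M⋊A)} = N∩C(M) = {n ∈ N : n⋊1 ∈ C(M⋊A)} (C(·) denotes the center). -/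

import Mathlib

open scoped TensorProduct

noncomputable section

/-- The componentwise star operation on a tensor product of star algebras,
as an additive map (it is conjugate-linear, hence not a `LinearMap`). -/
def tensorStar (A B : Type) [Ring A] [Algebra ℂ A] [StarRing A] [StarModule ℂ A]
    [Ring B] [Algebra ℂ B] [StarRing B] [StarModule ℂ B] :
    A ⊗[ℂ] B →+ A ⊗[ℂ] B :=
  TensorProduct.liftAddHom
    (AddMonoidHom.mk'
      (fun a => AddMonoidHom.mk' (fun b => star a ⊗ₜ[ℂ] star b)
        (fun x y => by
          show star a ⊗ₜ[ℂ] star (x + y) = star a ⊗ₜ[ℂ] star x + star a ⊗ₜ[ℂ] star y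
          rw [star_add, TensorProduct.tmul_add]))
      (fun x y => by
        ext b
        show star (x + y) ⊗ₜ[ℂ] star b = star x ⊗ₜ[ℂ] star b + star y ⊗ₜ[ℂ] star b
        rw [star_add, TensorProduct.add_tmul]))
    (fun r a b => by
      show star (r • a) ⊗ₜ[ℂ] star b = star a ⊗ₜ[ℂ] star (r • b)
      rw [star_smul, star_smul, TensorProduct.smul_tmul])

/-- A finite dimensional weak `*`-Hopf algebra over `ℂ` (axioms of [BNS]),
together with the derived properties of the antipode (which follow from the
axioms and are included as fields for convenience). -/
structure WeakHopfAlgebra (A : Type) [Ring A] [Algebra ℂ A] [StarRing A] [StarModule ℂ A] where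
  Δ : A →ₗ[ℂ] A ⊗[ℂ] A
  ε : A →ₗ[ℂ] ℂ
  S : A →ₗ[ℂ] A
  Sinv : A →ₗ[ℂ] A
  finite : FiniteDimensional ℂ A
  Δ_mul : ∀ x y : A, Δ (x * y) = Δ x * Δ y
  Δ_star : ∀ x : A, Δ (star x) = tensorStar A A (Δ x)
  coassoc : ∀ x : A,
    (TensorProduct.assoc ℂ A A A) ((TensorProduct.map Δ (LinearMap.id : A →ₗ[ℂ] A)) (Δ x))
      = (TensorProduct.map (LinearMap.id : A →ₗ[ℂ] A) Δ) (Δ x)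
  counit_left : ∀ x : A,
    (TensorProduct.lid ℂ A) ((TensorProduct.map ε (LinearMap.id : A →ₗ[ℂ] A)) (Δ x)) = x
  counit_right : ∀ x : A,
    (TensorProduct.rid ℂ A) ((TensorProduct.map (LinearMap.id : A →ₗ[ℂ] A) ε) (Δ x)) = x
  unit_weak :
    (Δ 1 ⊗ₜ[ℂ] (1 : A)) * ((TensorProduct.assoc ℂ A A A).symm ((1 : A) ⊗ₜ[ℂ] Δ 1))
      = (TensorProduct.map Δ (LinearMap.id : A →ₗ[ℂ] A)) (Δ 1)
  unit_weak' :
    ((TensorProduct.assoc ℂ A A A).symm ((1 : A) ⊗ₜ[ℂ] Δ 1)) * (Δ 1 ⊗ₜ[ℂ] (1 : A))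
      = (TensorProduct.map Δ (LinearMap.id : A →ₗ[ℂ] A)) (Δ 1)
  counit_weak : ∀ x y z : A,
    ε (x * y * z) = (TensorProduct.lid ℂ ℂ)
      ((TensorProduct.map (ε ∘ₗ LinearMap.mulLeft ℂ x) (ε ∘ₗ LinearMap.mulRight ℂ z)) (Δ y))
  counit_weak' : ∀ x y z : A,
    ε (x * y * z) = (TensorProduct.lid ℂ ℂ)
      ((TensorProduct.map (ε ∘ₗ LinearMap.mulRight ℂ z) (ε ∘ₗ LinearMap.mulLeft ℂ x)) (Δ y))
  antipode_left : ∀ x : A,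
    LinearMap.mul' ℂ A ((TensorProduct.map S (LinearMap.id : A →ₗ[ℂ] A)) (Δ x))
      = (TensorProduct.rid ℂ A)
          ((TensorProduct.map (LinearMap.id : A →ₗ[ℂ] A) (ε ∘ₗ LinearMap.mulLeft ℂ x)) (Δ 1))
  antipode_right : ∀ x : A,
    LinearMap.mul' ℂ A ((TensorProduct.map (LinearMap.id : A →ₗ[ℂ] A) S) (Δ x))
      = (TensorProduct.lid ℂ A)
          ((TensorProduct.map (ε ∘ₗ LinearMap.mulRight ℂ x) (LinearMap.id : A →ₗ[ℂ] A)) (Δ 1))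
  antipode_mid : ∀ x : A,
    LinearMap.mul' ℂ A
      ((TensorProduct.map (LinearMap.mul' ℂ A ∘ₗ TensorProduct.map S (LinearMap.id : A →ₗ[ℂ] A)) S)
        ((TensorProduct.map Δ (LinearMap.id : A →ₗ[ℂ] A)) (Δ x))) = S x
  S_Sinv : ∀ x : A, S (Sinv x) = x
  Sinv_S : ∀ x : A, Sinv (S x) = x
  S_antimul : ∀ x y : A, S (x * y) = S y * S x
  S_anticomul : ∀ x : A, Δ (S x) = (TensorProduct.comm ℂ A A) ((TensorProduct.map S S) (Δ x))
  S_star : ∀ x : A, star (S (star x)) = Sinv x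

/-- The set of elements commuting with everything. -/
def centerSet (R : Type) [Mul R] : Set R := {z | ∀ r : R, z * r = r * z}

namespace WeakHopfAlgebra

variable {A : Type} [Ring A] [Algebra ℂ A] [StarRing A] [StarModule ℂ A]

/-- `Σ x₍₁₎ · S(x₍₂₎)`. -/
def swIdS (W : WeakHopfAlgebra A) (x : A) : A :=
  LinearMap.mul' ℂ A ((TensorProduct.map (LinearMap.id : A →ₗ[ℂ] A) W.S) (W.Δ x))

/-- `Σ S(x₍₁₎) · x₍₂₎`. -/
def swSId (W : WeakHopfAlgebra A) (x : A) : A :=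
  LinearMap.mul' ℂ A ((TensorProduct.map W.S (LinearMap.id : A →ₗ[ℂ] A)) (W.Δ x))

/-- `Σ x₍₂₎ · S⁻¹(x₍₁₎)`. -/
def swIdSinv (W : WeakHopfAlgebra A) (x : A) : A :=
  LinearMap.mul' ℂ A
    ((TensorProduct.map (LinearMap.id : A →ₗ[ℂ] A) W.Sinv) ((TensorProduct.comm ℂ A A) (W.Δ x)))

/-- `Σ S⁻¹(x₍₂₎) · x₍₁₎`. -/
def swSinvId (W : WeakHopfAlgebra A) (x : A) : A :=
  LinearMap.mul' ℂ A
    ((TensorProduct.map W.Sinv (LinearMap.id : A →ₗ[ℂ] A)) ((TensorProduct.comm ℂ A A) (W.Δ x)))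

/-- The left subalgebra `A_L = {(φ ⊗ id)(Δ 1) : φ ∈ A*}`. -/
def AL (W : WeakHopfAlgebra A) : Set A :=
  {a | ∃ φ : A →ₗ[ℂ] ℂ,
    a = (TensorProduct.lid ℂ A) ((TensorProduct.map φ (LinearMap.id : A →ₗ[ℂ] A)) (W.Δ 1))}

/-- The right subalgebra `A_R = {(id ⊗ φ)(Δ 1) : φ ∈ A*}`. -/
def AR (W : WeakHopfAlgebra A) : Set A :=
  {a | ∃ φ : A →ₗ[ℂ] ℂ,
    a = (TensorProduct.rid ℂ A) ((TensorProduct.map (LinearMap.id : A →ₗ[ℂ] A) φ) (W.Δ 1))}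

/-- A left integral: `a · l = Σ a₍₁₎ S(a₍₂₎) · l` for all `a`. -/
def IsLeftIntegral (W : WeakHopfAlgebra A) (l : A) : Prop := ∀ a : A, a * l = W.swIdS a * l

/-- A right integral: `r · a = r · Σ S(a₍₁₎) a₍₂₎` for all `a`. -/
def IsRightIntegral (W : WeakHopfAlgebra A) (r : A) : Prop := ∀ a : A, r * a = r * W.swSId a

/-- A normalized Haar integral. -/
def IsHaar (W : WeakHopfAlgebra A) (h : A) : Prop :=
  W.IsLeftIntegral h ∧ W.IsRightIntegral h ∧ W.swSId h = 1 ∧ W.swIdS h = 1 ∧ W.S h = h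

/-- The canonical left action of a functional `λ ∈ A*` on `A`:
`λ ⇀ a = Σ a₍₁₎ · ⟨λ, a₍₂₎⟩`. -/
def lact (W : WeakHopfAlgebra A) (lam : A →ₗ[ℂ] ℂ) : A →ₗ[ℂ] A :=
  (TensorProduct.rid ℂ A).toLinearMap ∘ₗ
    (TensorProduct.map (LinearMap.id : A →ₗ[ℂ] A) lam) ∘ₗ W.Δ

/-- `λ ∈ A*` is a left integral of the dual weak Hopf algebra:
`λ ⇀ a ∈ A_L` for all `a ∈ A`. -/
def IsDualLeftIntegral (W : WeakHopfAlgebra A) (lam : A →ₗ[ℂ] ℂ) : Prop :=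
  ∀ a : A, W.lact lam a ∈ W.AL

/-- A dual pair of left integrals `(l, λ)`. -/
def IsDualPair (W : WeakHopfAlgebra A) (l : A) (lam : A →ₗ[ℂ] ℂ) : Prop :=
  W.IsLeftIntegral l ∧ W.IsDualLeftIntegral lam ∧
  W.lact lam l = 1 ∧
  (∀ a : A,
    (TensorProduct.rid ℂ A)
      ((TensorProduct.map (LinearMap.id : A →ₗ[ℂ] A) (lam ∘ₗ LinearMap.mulLeft ℂ a)) (W.Δ l))
      = W.S a) ∧
  (∀ a : A,
    (TensorProduct.lid ℂ A)
      ((TensorProduct.map (lam ∘ₗ LinearMap.mulRight ℂ a ∘ₗ W.Sinv)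
        (LinearMap.id : A →ₗ[ℂ] A)) (W.Δ l)) = a)

end WeakHopfAlgebra

/-- A (left) module `*`-algebra over a weak `*`-Hopf algebra. -/
structure ModuleAlgebra {A : Type} [Ring A] [Algebra ℂ A] [StarRing A] [StarModule ℂ A]
    (W : WeakHopfAlgebra A) (M : Type) [Ring M] [Algebra ℂ M] [StarRing M] [StarModule ℂ M] where
  act : A →ₗ[ℂ] M →ₗ[ℂ] M
  act_mul : ∀ (a b : A) (m : M), act (a * b) m = act a (act b m)
  act_one : ∀ m : M, act 1 m = m
  act_mul' : ∀ (a : A) (m n : M),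
    act a (m * n) = LinearMap.mul' ℂ M ((TensorProduct.map (act.flip m) (act.flip n)) (W.Δ a))
  act_star : ∀ (a : A) (m : M), star (act a m) = act (star (W.S a)) (star m)
  act_unit : ∀ a : A, act a 1 = act (W.swIdS a) 1

namespace ModuleAlgebra

variable {A : Type} [Ring A] [Algebra ℂ A] [StarRing A] [StarModule ℂ A]
variable {M : Type} [Ring M] [Algebra ℂ M] [StarRing M] [StarModule ℂ M]
variable {W : WeakHopfAlgebra A}

/-- `M_R = A ▷ 1_M`. -/
def MR (MA : ModuleAlgebra W M) : Set M := Set.range fun a : A => MA.act a 1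

/-- The fixed point algebra `M^A`. -/
def fixed (MA : ModuleAlgebra W M) : Set M :=
  {n | ∀ (a : A) (m : M), MA.act a (m * n) = MA.act a m * n}

end ModuleAlgebra

section Crossed

variable {A : Type} [Ring A] [Algebra ℂ A] [StarRing A] [StarModule ℂ A]
variable {M : Type} [Ring M] [Algebra ℂ M] [StarRing M] [StarModule ℂ M]
variable {W : WeakHopfAlgebra A}

/-- The subspace of `M ⊗ A` by which one divides to form the crossed product
`M ⋊ A = M ⊗_{A_L} A`. -/
def crossedRel (MA : ModuleAlgebra W M) : Submodule ℂ (M ⊗[ℂ] A) :=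
  Submodule.span ℂ
    {x | ∃ (m : M) (a b : A), b ∈ W.AL ∧
      x = (m * MA.act b 1) ⊗ₜ[ℂ] a - m ⊗ₜ[ℂ] (b * a)}

/-- The crossed product `M ⋊ A` as a vector space. -/
abbrev Crossed (MA : ModuleAlgebra W M) : Type := (M ⊗[ℂ] A) ⧸ crossedRel MA

/-- The canonical projection `M ⊗ A → M ⋊ A`; `cmk MA (m ⊗ₜ a)` is `m ⋊ a`. -/
def cmk (MA : ModuleAlgebra W M) : M ⊗[ℂ] A →ₗ[ℂ] Crossed MA := (crossedRel MA).mkQ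

/-- The embedding `M → M ⋊ A`, `m ↦ m ⋊ 1`. -/
def iM (MA : ModuleAlgebra W M) : M →ₗ[ℂ] Crossed MA :=
  cmk MA ∘ₗ (TensorProduct.mk ℂ M A).flip (1 : A)

/-- The map `A → M ⋊ A`, `a ↦ 1 ⋊ a`. -/
def iA (MA : ModuleAlgebra W M) : A →ₗ[ℂ] Crossed MA :=
  cmk MA ∘ₗ (TensorProduct.mk ℂ M A) (1 : M)

/-- The unit `1 ⋊ 1` of `M ⋊ A`. -/
def oneC (MA : ModuleAlgebra W M) : Crossed MA := cmk MA ((1 : M) ⊗ₜ[ℂ] (1 : A))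

/-- The multiplication of the crossed product `M ⋊ A`
(whose existence is the content of Theorem 3.1), as a bundled bilinear map
together with its defining formula on generators:
`(m ⋊ a)(m' ⋊ a') = Σ m (a₍₁₎ ▷ m') ⋊ a₍₂₎ a'`. -/
structure CrossedMul (MA : ModuleAlgebra W M) where
  mul : Crossed MA →ₗ[ℂ] Crossed MA →ₗ[ℂ] Crossed MA
  mul_def : ∀ (m m' : M) (a a' : A),
    mul (cmk MA (m ⊗ₜ[ℂ] a)) (cmk MA (m' ⊗ₜ[ℂ] a'))
      = cmk MA ((TensorProduct.map ((LinearMap.mulLeft ℂ m) ∘ₗ (MA.act.flip m'))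
          (LinearMap.mulRight ℂ a')) (W.Δ a))

/-- The star operation of the crossed product `M ⋊ A`
(whose existence is part of Theorem 3.1):
`(m ⋊ a)* = Σ (a₍₁₎* ▷ m*) ⋊ a₍₂₎*`. -/
structure CrossedStar (MA : ModuleAlgebra W M) where
  st : Crossed MA →+ Crossed MA
  st_smul : ∀ (c : ℂ) (x : Crossed MA), st (c • x) = (starRingEnd ℂ c) • st x
  st_def : ∀ (m : M) (a : A),
    st (cmk MA (m ⊗ₜ[ℂ] a))
      = cmk MA ((TensorProduct.map (MA.act.flip (star m)) (LinearMap.id : A →ₗ[ℂ] A))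
          (W.Δ (star a)))

/-- The multiplication on `(M ⋊ A) ⊗ B` induced by a crossed product
multiplication on `M ⋊ A` and the algebra structure of `B`. -/
def mulT (MA : ModuleAlgebra W M) (CS : CrossedMul MA) (B : Type) [Ring B] [Algebra ℂ B] :
    Crossed MA ⊗[ℂ] B →ₗ[ℂ] Crossed MA ⊗[ℂ] B →ₗ[ℂ] Crossed MA ⊗[ℂ] B :=
  TensorProduct.lift
    ((TensorProduct.mapBilinear (σ₁₂ := RingHom.id ℂ) (M := Crossed MA) (N := B)
      (M₂ := Crossed MA) (N₂ := B)).compl₁₂ CS.mul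
      (LinearMap.mul ℂ B))

end Crossed

section AuxWHA

set_option maxHeartbeats 1000000
set_option synthInstance.maxHeartbeats 200000
set_option linter.unusedSectionVars false

open TensorProduct LinearMap

variable {A : Type} [Ring A] [Algebra ℂ A] [StarRing A] [StarModule ℂ A]

-- tiny ring lemmas
private lemma mulRight_add' {R : Type} [Ring R] [Algebra ℂ R] (v v' : R) :
    LinearMap.mulRight ℂ (v + v') = LinearMap.mulRight ℂ v + LinearMap.mulRight ℂ v' :=
  LinearMap.ext fun w => mul_add w v v'

private lemma mulRight_zero' {R : Type} [Ring R] [Algebra ℂ R] :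
    LinearMap.mulRight ℂ (0 : R) = 0 :=
  LinearMap.ext fun w => mul_zero w

namespace WeakHopfAlgebra

variable (W : WeakHopfAlgebra A)

/-- bundled `swIdS`. -/
def swl : A →ₗ[ℂ] A := LinearMap.mul' ℂ A ∘ₗ map LinearMap.id W.S ∘ₗ W.Δ
/-- bundled `swSId`. -/
def swr : A →ₗ[ℂ] A := LinearMap.mul' ℂ A ∘ₗ map W.S LinearMap.id ∘ₗ W.Δ

lemma swl_apply (x : A) :
    W.swl x = LinearMap.mul' ℂ A ((map LinearMap.id W.S) (W.Δ x)) := rfl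

lemma swl_eq_swIdS (x : A) : W.swl x = W.swIdS x := rfl
lemma swr_eq_swSId (x : A) : W.swr x = W.swSId x := rfl

/-- an `A_L` slice. -/
def alS (φ : A →ₗ[ℂ] ℂ) : A := (TensorProduct.lid ℂ A) ((map φ LinearMap.id) (W.Δ 1))
/-- an `A_R` slice. -/
def arS (ψ : A →ₗ[ℂ] ℂ) : A := (TensorProduct.rid ℂ A) ((map LinearMap.id ψ) (W.Δ 1))

lemma alS_mem (φ : A →ₗ[ℂ] ℂ) : W.alS φ ∈ W.AL := ⟨φ, rfl⟩
lemma arS_mem (ψ : A →ₗ[ℂ] ℂ) : W.arS ψ ∈ W.AR := ⟨ψ, rfl⟩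

lemma mem_AL_iff {a : A} : a ∈ W.AL ↔ ∃ φ, a = W.alS φ := Iff.rfl
lemma mem_AR_iff {a : A} : a ∈ W.AR ↔ ∃ ψ, a = W.arS ψ := Iff.rfl

lemma swl_slice (x : A) : W.swl x = W.alS (W.ε ∘ₗ mulRight ℂ x) := W.antipode_right x
lemma swr_slice (x : A) : W.swr x = W.arS (W.ε ∘ₗ mulLeft ℂ x) := W.antipode_left x

lemma swl_mem_AL (x : A) : W.swl x ∈ W.AL := by rw [W.swl_slice]; exact W.alS_mem _

lemma Δ_one_mul (x : A) : W.Δ x = W.Δ 1 * W.Δ x := by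
  have h := W.Δ_mul 1 x; rwa [one_mul] at h

lemma swl_one : W.swl 1 = 1 := by
  rw [W.swl_slice, alS, LinearMap.mulRight_one, LinearMap.comp_id]
  exact W.counit_left 1

lemma swr_one : W.swr 1 = 1 := by
  rw [W.swr_slice, arS, LinearMap.mulLeft_one, LinearMap.comp_id]
  exact W.counit_right 1

/-- joint contraction `(p⊗q)⊗(x⊗y) ↦ ε(x*q) • (p⊗y)`. -/
def Jmap : (A ⊗[ℂ] A) ⊗[ℂ] (A ⊗[ℂ] A) →ₗ[ℂ] A ⊗[ℂ] A :=
  (TensorProduct.rid ℂ (A ⊗[ℂ] A)).toLinearMap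
    ∘ₗ map LinearMap.id (W.ε ∘ₗ LinearMap.mul' ℂ A ∘ₗ (TensorProduct.comm ℂ A A).toLinearMap)
    ∘ₗ (TensorProduct.tensorTensorTensorComm ℂ A A A A).toLinearMap
    ∘ₗ map LinearMap.id (TensorProduct.comm ℂ A A).toLinearMap

lemma Jmap_tmul (p q x y : A) :
    W.Jmap ((p ⊗ₜ q) ⊗ₜ (x ⊗ₜ y)) = W.ε (x * q) • (p ⊗ₜ y) := by
  simp [Jmap, TensorProduct.tensorTensorTensorComm_tmul, TensorProduct.comm_tmul,
    TensorProduct.rid_tmul, LinearMap.mul'_apply]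

def cMap (e : A ⊗[ℂ] A) : A →ₗ[ℂ] A :=
  (TensorProduct.rid ℂ A).toLinearMap ∘ₗ map LinearMap.id W.ε ∘ₗ mulRight ℂ e
    ∘ₗ TensorProduct.mk ℂ A A 1

lemma cMap_tmul (p q x : A) : W.cMap (p ⊗ₜ q) x = W.ε (x * q) • p := by
  simp [cMap, Algebra.TensorProduct.tmul_mul_tmul]

lemma cMap_add (e e' : A ⊗[ℂ] A) : W.cMap (e + e') = W.cMap e + W.cMap e' := by
  unfold cMap; rw [mulRight_add']; ext x; simp

lemma cMap_zero : W.cMap (0 : A ⊗[ℂ] A) = 0 := by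
  unfold cMap; rw [mulRight_zero']; ext x; simp

lemma JJ (s t : A ⊗[ℂ] A) : W.Jmap (s ⊗ₜ t) = (map (W.cMap s) LinearMap.id) t := by
  induction s using TensorProduct.induction_on with
  | zero => simp [W.cMap_zero]
  | tmul p q =>
    induction t using TensorProduct.induction_on with
    | zero => simp
    | tmul x y => rw [Jmap_tmul, map_tmul, cMap_tmul, LinearMap.id_coe, id_eq,
        TensorProduct.smul_tmul']
    | add u v hu hv => simp only [TensorProduct.tmul_add, map_add, hu, hv]
  | add u v hu hv =>
    simp only [TensorProduct.add_tmul, map_add, hu, hv, W.cMap_add,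
      TensorProduct.map_add_left, LinearMap.add_apply]

lemma mul_tmul_one_right (t : A ⊗[ℂ] A) (a : A) :
    t * (a ⊗ₜ (1 : A)) = (map (mulRight ℂ a) LinearMap.id) t := by
  induction t using TensorProduct.induction_on with
  | zero => simp
  | tmul p q => simp [Algebra.TensorProduct.tmul_mul_tmul]
  | add u v hu hv => simp only [add_mul, hu, hv, map_add]

lemma mul_one_tmul_right (t : A ⊗[ℂ] A) (a : A) :
    t * ((1 : A) ⊗ₜ a) = (map LinearMap.id (mulRight ℂ a)) t := by
  induction t using TensorProduct.induction_on with
  | zero => simp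
  | tmul p q => simp [Algebra.TensorProduct.tmul_mul_tmul]
  | add u v hu hv => simp only [add_mul, hu, hv, map_add]

lemma Jmap_mulRight (s t : A ⊗[ℂ] A) (a : A) :
    W.Jmap (((map (mulRight ℂ a) LinearMap.id) s) ⊗ₜ t)
      = (map (mulRight ℂ a) LinearMap.id) (W.Jmap (s ⊗ₜ t)) := by
  induction s using TensorProduct.induction_on with
  | zero => simp
  | tmul p q =>
    induction t using TensorProduct.induction_on with
    | zero => simp
    | tmul x y => simp [Jmap_tmul]
    | add u v hu hv => simp only [TensorProduct.tmul_add, map_add, hu, hv]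
  | add u v hu hv =>
    simp only [map_add, TensorProduct.add_tmul, hu, hv]

/-- `Θ₀ : (p⊗q)⊗r ↦ ε(q) • (p ⊗ r)`. -/
def th0 : (A ⊗[ℂ] A) ⊗[ℂ] A →ₗ[ℂ] A ⊗[ℂ] A :=
  map ((TensorProduct.rid ℂ A).toLinearMap ∘ₗ map LinearMap.id W.ε) LinearMap.id

lemma Dbasic : W.Jmap (W.Δ 1 ⊗ₜ W.Δ 1) = W.Δ 1 := by
  have h2 : ∀ s t : A ⊗[ℂ] A,
      W.th0 (((TensorProduct.assoc ℂ A A A).symm ((1:A) ⊗ₜ t)) * (s ⊗ₜ (1:A)))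
        = W.Jmap (s ⊗ₜ t) := by
    intro s t
    induction s using TensorProduct.induction_on with
    | zero => simp
    | tmul p q =>
      induction t using TensorProduct.induction_on with
      | zero =>
        rw [TensorProduct.tmul_zero, LinearEquiv.map_zero, zero_mul, map_zero,
          TensorProduct.tmul_zero, map_zero]
      | tmul x y =>
        rw [TensorProduct.assoc_symm_tmul]
        rw [show ((((1:A) ⊗ₜ[ℂ] x) ⊗ₜ[ℂ] y) * ((p ⊗ₜ[ℂ] q) ⊗ₜ[ℂ] (1:A)))
            = ((p ⊗ₜ[ℂ] (x*q)) ⊗ₜ[ℂ] y) by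
          rw [Algebra.TensorProduct.tmul_mul_tmul, Algebra.TensorProduct.tmul_mul_tmul,
            one_mul, mul_one]]
        rw [Jmap_tmul]
        simp [th0, TensorProduct.smul_tmul']
      | add u v hu hv =>
        simp only [TensorProduct.tmul_add, map_add, add_mul, hu, hv]
    | add u v hu hv =>
      simp only [TensorProduct.add_tmul, mul_add, map_add, hu, hv]
  have h1 : W.th0 ((map W.Δ LinearMap.id) (W.Δ 1)) = W.Δ 1 := by
    unfold th0
    rw [← LinearMap.comp_apply, ← TensorProduct.map_comp, LinearMap.id_comp]
    have hcr : (((TensorProduct.rid ℂ A).toLinearMap ∘ₗ map LinearMap.id W.ε) ∘ₗ W.Δ)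
        = LinearMap.id := LinearMap.ext fun x => by
      simp only [LinearMap.comp_apply, LinearEquiv.coe_coe, LinearMap.id_apply]
      exact W.counit_right x
    rw [hcr, TensorProduct.map_id, LinearMap.id_apply]
  rw [← h2, W.unit_weak', h1]

lemma Dfull (a : A) :
    W.Jmap ((W.Δ 1 * (a ⊗ₜ (1:A))) ⊗ₜ W.Δ 1) = W.Δ 1 * (a ⊗ₜ (1:A)) := by
  rw [mul_tmul_one_right, W.Jmap_mulRight, W.Dbasic, ← mul_tmul_one_right]

end WeakHopfAlgebra

end AuxWHA

section AuxWHA2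

set_option maxHeartbeats 1600000
set_option synthInstance.maxHeartbeats 400000
set_option linter.unusedSectionVars false

open TensorProduct LinearMap

variable {A : Type} [Ring A] [Algebra ℂ A] [StarRing A] [StarModule ℂ A]

namespace WeakHopfAlgebra

variable (W : WeakHopfAlgebra A)

lemma cMap_eq (e : A ⊗[ℂ] A) (x : A) :
    W.cMap e x = (TensorProduct.rid ℂ A) ((map LinearMap.id (W.ε ∘ₗ mulLeft ℂ x)) e) := by
  induction e using TensorProduct.induction_on with
  | zero => simp [W.cMap_zero]
  | tmul p q => rw [W.cMap_tmul]; simp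
  | add u v hu hv => simp only [W.cMap_add, LinearMap.add_apply, map_add, hu, hv]

private lemma mulRight_add'' {R : Type} [Ring R] [Algebra ℂ R] (v v' : R) :
    LinearMap.mulRight ℂ (v + v') = LinearMap.mulRight ℂ v + LinearMap.mulRight ℂ v' :=
  LinearMap.ext fun w => mul_add w v v'

private lemma mulRight_zero'' {R : Type} [Ring R] [Algebra ℂ R] :
    LinearMap.mulRight ℂ (0 : R) = 0 :=
  LinearMap.ext fun w => mul_zero w

lemma Clem (z a : A) :
    (TensorProduct.rid ℂ A) ((map LinearMap.id (W.ε ∘ₗ mulLeft ℂ z)) (W.Δ a))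
      = (TensorProduct.rid ℂ A) ((map (mulRight ℂ a) (W.ε ∘ₗ mulLeft ℂ z)) (W.Δ 1)) := by
  have C1 : ∀ u v : A ⊗[ℂ] A,
      (TensorProduct.rid ℂ A) ((map LinearMap.id (W.ε ∘ₗ mulLeft ℂ z)) (u * v))
        = (TensorProduct.rid ℂ A)
            ((map ((TensorProduct.rid ℂ A).toLinearMap ∘ₗ map LinearMap.id W.ε
                    ∘ₗ mulRight ℂ v)
              (W.ε ∘ₗ mulLeft ℂ z))
              ((TensorProduct.assoc ℂ A A A).symm ((map LinearMap.id W.Δ) u))) := by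
    intro u v
    induction u using TensorProduct.induction_on with
    | zero => simp [zero_mul]
    | tmul p q =>
      rw [map_tmul, LinearMap.id_apply]
      induction v using TensorProduct.induction_on with
      | zero =>
        rw [mul_zero, map_zero, map_zero, mulRight_zero'', LinearMap.comp_zero,
          LinearMap.comp_zero]
        rw [show (map (0 : A ⊗[ℂ] A →ₗ[ℂ] A) (W.ε ∘ₗ mulLeft ℂ z)) = 0 from
          TensorProduct.map_zero_left _]
        simp
      | tmul r s =>
        rw [Algebra.TensorProduct.tmul_mul_tmul, map_tmul, LinearMap.id_apply,
          TensorProduct.rid_tmul, LinearMap.comp_apply, LinearMap.mulLeft_apply]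
        have hε : W.ε (z * (q * s)) = (TensorProduct.lid ℂ ℂ)
            ((map (W.ε ∘ₗ mulRight ℂ s) (W.ε ∘ₗ mulLeft ℂ z)) (W.Δ q)) := by
          rw [← mul_assoc]; exact W.counit_weak' z q s
        rw [hε]
        generalize W.Δ q = t
        induction t using TensorProduct.induction_on with
        | zero => simp
        | tmul q1 q2 =>
          simp only [TensorProduct.assoc_symm_tmul, map_tmul, LinearMap.comp_apply,
            LinearMap.mulLeft_apply, LinearMap.mulRight_apply, TensorProduct.lid_tmul,
            TensorProduct.rid_tmul, LinearMap.id_apply, LinearEquiv.coe_coe,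
            Algebra.TensorProduct.tmul_mul_tmul, smul_eq_mul, smul_smul]
          rw [mul_comm]
        | add u1 u2 h1 h2 =>
          simp only [map_add, TensorProduct.tmul_add, LinearMap.add_apply, add_smul, h1, h2]
      | add v1 v2 h1 h2 =>
        rw [mul_add, map_add, map_add, mulRight_add'', LinearMap.comp_add, LinearMap.comp_add,
          TensorProduct.map_add_left, LinearMap.add_apply, map_add, h1, h2]
    | add u1 u2 h1 h2 =>
      simp only [add_mul, map_add, h1, h2]
  rw [W.Δ_one_mul a, C1 (W.Δ 1) (W.Δ a)]
  have hco : (TensorProduct.assoc ℂ A A A).symm ((map LinearMap.id W.Δ) (W.Δ 1))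
      = (map W.Δ LinearMap.id) (W.Δ 1) := by
    rw [← W.coassoc 1, LinearEquiv.symm_apply_apply]
  rw [hco]
  rw [show (map ((TensorProduct.rid ℂ A).toLinearMap ∘ₗ map LinearMap.id W.ε
        ∘ₗ mulRight ℂ (W.Δ a)) (W.ε ∘ₗ mulLeft ℂ z)) ((map W.Δ LinearMap.id) (W.Δ 1))
      = (map (((TensorProduct.rid ℂ A).toLinearMap ∘ₗ map LinearMap.id W.ε
        ∘ₗ mulRight ℂ (W.Δ a)) ∘ₗ W.Δ) ((W.ε ∘ₗ mulLeft ℂ z) ∘ₗ LinearMap.id)) (W.Δ 1) from by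
    rw [← LinearMap.comp_apply, ← TensorProduct.map_comp]]
  have hg : (((TensorProduct.rid ℂ A).toLinearMap ∘ₗ map LinearMap.id W.ε
      ∘ₗ mulRight ℂ (W.Δ a)) ∘ₗ W.Δ) = mulRight ℂ a := by
    apply LinearMap.ext; intro w
    simp only [LinearMap.comp_apply, LinearMap.mulRight_apply, LinearEquiv.coe_coe]
    rw [← W.Δ_mul]
    exact W.counit_right (w * a)
  rw [hg, LinearMap.comp_id]

end WeakHopfAlgebra

end AuxWHA2

section AuxWHA3

set_option maxHeartbeats 1600000
set_option synthInstance.maxHeartbeats 400000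
set_option linter.unusedSectionVars false

open TensorProduct LinearMap

variable {A : Type} [Ring A] [Algebra ℂ A] [StarRing A] [StarModule ℂ A]

namespace WeakHopfAlgebra

variable (W : WeakHopfAlgebra A)

lemma cMap_C (a : A) : W.cMap (W.Δ a) = W.cMap (W.Δ 1 * (a ⊗ₜ (1:A))) := by
  apply LinearMap.ext; intro x
  rw [W.cMap_eq, W.cMap_eq, mul_tmul_one_right]
  rw [show (map LinearMap.id (W.ε ∘ₗ mulLeft ℂ x)) ((map (mulRight ℂ a) LinearMap.id) (W.Δ 1))
      = (map (mulRight ℂ a) (W.ε ∘ₗ mulLeft ℂ x)) (W.Δ 1) from by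
    rw [← LinearMap.comp_apply, ← TensorProduct.map_comp, LinearMap.id_comp,
      LinearMap.comp_id]]
  exact W.Clem x a

lemma I2 (a : A) : (map LinearMap.id W.swl) (W.Δ a) = W.Δ 1 * (a ⊗ₜ (1:A)) := by
  have sub : ∀ (p q : A) (t : A ⊗[ℂ] A),
      W.Jmap ((p ⊗ₜ q) ⊗ₜ t)
        = p ⊗ₜ ((TensorProduct.lid ℂ A) ((map (W.ε ∘ₗ mulRight ℂ q) LinearMap.id) t)) := by
    intro p q t
    induction t using TensorProduct.induction_on with
    | zero => simp
    | tmul x y =>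
      rw [W.Jmap_tmul]
      simp only [map_tmul, LinearMap.comp_apply, LinearMap.mulRight_apply,
        TensorProduct.lid_tmul, LinearMap.id_apply]
      rw [TensorProduct.tmul_smul]
    | add u v hu hv => simp only [TensorProduct.tmul_add, map_add, hu, hv]
  have hs : ∀ s : A ⊗[ℂ] A, (map LinearMap.id W.swl) s = W.Jmap (s ⊗ₜ W.Δ 1) := by
    intro s
    induction s using TensorProduct.induction_on with
    | zero => simp
    | tmul p q =>
      rw [map_tmul, LinearMap.id_apply, sub p q (W.Δ 1)]
      congr 1
      exact W.swl_slice q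
    | add u v hu hv => simp only [map_add, TensorProduct.add_tmul, hu, hv]
  rw [hs (W.Δ a), W.JJ, W.cMap_C, ← W.JJ, W.Dfull]

lemma I2_one : (map LinearMap.id W.swl) (W.Δ 1) = W.Δ 1 := by
  rw [W.I2 1, ← Algebra.TensorProduct.one_def, mul_one]

/-- `(p⊗q)⊗r ↦ ψ r • (φ p • q)` -/
def lamMap (φ ψ : A →ₗ[ℂ] ℂ) : (A ⊗[ℂ] A) ⊗[ℂ] A →ₗ[ℂ] A :=
  (TensorProduct.rid ℂ A).toLinearMap
    ∘ₗ map ((TensorProduct.lid ℂ A).toLinearMap ∘ₗ map φ LinearMap.id) ψ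

lemma AL_AR_comm (φ ψ : A →ₗ[ℂ] ℂ) : W.alS φ * W.arS ψ = W.arS ψ * W.alS φ := by
  have e1 : ∀ s t : A ⊗[ℂ] A,
      lamMap φ ψ ((s ⊗ₜ (1:A)) * ((TensorProduct.assoc ℂ A A A).symm ((1:A) ⊗ₜ t)))
        = (TensorProduct.lid ℂ A) ((map φ LinearMap.id) s)
            * (TensorProduct.rid ℂ A) ((map LinearMap.id ψ) t) := by
    intro s t
    induction s using TensorProduct.induction_on with
    | zero => simp [TensorProduct.zero_tmul]
    | tmul p q =>
      induction t using TensorProduct.induction_on with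
      | zero =>
        rw [TensorProduct.tmul_zero, LinearEquiv.map_zero, mul_zero, map_zero, map_zero,
          map_zero, mul_zero]
      | tmul x y =>
        rw [TensorProduct.assoc_symm_tmul]
        rw [show (((p ⊗ₜ[ℂ] q) ⊗ₜ[ℂ] (1:A)) * (((1:A) ⊗ₜ[ℂ] x) ⊗ₜ[ℂ] y))
            = ((p ⊗ₜ[ℂ] (q*x)) ⊗ₜ[ℂ] y) from by
          rw [Algebra.TensorProduct.tmul_mul_tmul, Algebra.TensorProduct.tmul_mul_tmul,
            mul_one, one_mul]]
        simp only [lamMap, LinearMap.comp_apply, map_tmul, LinearEquiv.coe_coe,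
          TensorProduct.lid_tmul, TensorProduct.rid_tmul, LinearMap.id_apply]
        rw [smul_mul_assoc, mul_smul_comm, smul_comm]
      | add u v hu hv =>
        simp only [TensorProduct.tmul_add, map_add, mul_add, hu, hv]
    | add u v hu hv =>
      simp only [TensorProduct.add_tmul, add_mul, map_add, hu, hv]
  have e2 : ∀ s t : A ⊗[ℂ] A,
      lamMap φ ψ (((TensorProduct.assoc ℂ A A A).symm ((1:A) ⊗ₜ t)) * (s ⊗ₜ (1:A)))
        = (TensorProduct.rid ℂ A) ((map LinearMap.id ψ) t)
            * (TensorProduct.lid ℂ A) ((map φ LinearMap.id) s) := by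
    intro s t
    induction s using TensorProduct.induction_on with
    | zero => simp [TensorProduct.zero_tmul]
    | tmul p q =>
      induction t using TensorProduct.induction_on with
      | zero =>
        rw [TensorProduct.tmul_zero, LinearEquiv.map_zero, zero_mul, map_zero, map_zero,
          map_zero, zero_mul]
      | tmul x y =>
        rw [TensorProduct.assoc_symm_tmul]
        rw [show ((((1:A) ⊗ₜ[ℂ] x) ⊗ₜ[ℂ] y) * ((p ⊗ₜ[ℂ] q) ⊗ₜ[ℂ] (1:A)))
            = ((p ⊗ₜ[ℂ] (x*q)) ⊗ₜ[ℂ] y) from by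
          rw [Algebra.TensorProduct.tmul_mul_tmul, Algebra.TensorProduct.tmul_mul_tmul,
            mul_one, one_mul]]
        simp only [lamMap, LinearMap.comp_apply, map_tmul, LinearEquiv.coe_coe,
          TensorProduct.lid_tmul, TensorProduct.rid_tmul, LinearMap.id_apply]
        rw [smul_mul_assoc, mul_smul_comm, smul_comm]
      | add u v hu hv =>
        simp only [TensorProduct.tmul_add, map_add, add_mul, hu, hv]
    | add u v hu hv =>
      simp only [TensorProduct.add_tmul, mul_add, map_add, hu, hv]
  have h := congrArg (lamMap φ ψ) (W.unit_weak.trans W.unit_weak'.symm)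
  rw [e1, e2] at h
  exact h

lemma delta_alS (φ : A →ₗ[ℂ] ℂ) :
    W.Δ (W.alS φ) = (W.alS φ ⊗ₜ (1:A)) * W.Δ 1 := by
  have e0 : ∀ t : A ⊗[ℂ] A,
      W.Δ ((TensorProduct.lid ℂ A) ((map φ LinearMap.id) t))
        = (TensorProduct.lid ℂ (A ⊗[ℂ] A))
            ((map φ LinearMap.id) ((map LinearMap.id W.Δ) t)) := by
    intro t
    induction t using TensorProduct.induction_on with
    | zero => simp
    | tmul x y => simp
    | add u v hu hv => simp only [map_add, hu, hv]
  have e3 : ∀ s t : A ⊗[ℂ] A,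
      (TensorProduct.lid ℂ (A ⊗[ℂ] A))
        ((map φ LinearMap.id)
          ((TensorProduct.assoc ℂ A A A) ((s ⊗ₜ (1:A))
            * ((TensorProduct.assoc ℂ A A A).symm ((1:A) ⊗ₜ t)))))
        = (((TensorProduct.lid ℂ A) ((map φ LinearMap.id) s)) ⊗ₜ (1:A)) * t := by
    intro s t
    induction s using TensorProduct.induction_on with
    | zero => simp [TensorProduct.zero_tmul]
    | tmul p q =>
      induction t using TensorProduct.induction_on with
      | zero =>
        rw [TensorProduct.tmul_zero, LinearEquiv.map_zero, mul_zero, LinearEquiv.map_zero,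
          map_zero, map_zero, mul_zero]
      | tmul x y =>
        rw [TensorProduct.assoc_symm_tmul]
        rw [show (((p ⊗ₜ[ℂ] q) ⊗ₜ[ℂ] (1:A)) * (((1:A) ⊗ₜ[ℂ] x) ⊗ₜ[ℂ] y))
            = ((p ⊗ₜ[ℂ] (q*x)) ⊗ₜ[ℂ] y) from by
          rw [Algebra.TensorProduct.tmul_mul_tmul, Algebra.TensorProduct.tmul_mul_tmul,
            mul_one, one_mul]]
        rw [TensorProduct.assoc_tmul]
        simp only [map_tmul, LinearMap.id_apply, TensorProduct.lid_tmul,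
          Algebra.TensorProduct.tmul_mul_tmul]
        rw [smul_mul_assoc, one_mul, TensorProduct.smul_tmul']
      | add u v hu hv =>
        simp only [TensorProduct.tmul_add, map_add, mul_add, hu, hv]
    | add u v hu hv =>
      simp only [TensorProduct.add_tmul, add_mul, map_add, hu, hv]
  have : W.Δ (W.alS φ)
      = (TensorProduct.lid ℂ (A ⊗[ℂ] A))
          ((map φ LinearMap.id) ((map LinearMap.id W.Δ) (W.Δ 1))) := e0 (W.Δ 1)
  rw [this, ← W.coassoc 1, ← W.unit_weak, e3]
  rfl

lemma delta_arS (ψ : A →ₗ[ℂ] ℂ) :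
    W.Δ (W.arS ψ) = W.Δ 1 * ((1:A) ⊗ₜ W.arS ψ) := by
  have e0 : ∀ t : A ⊗[ℂ] A,
      W.Δ ((TensorProduct.rid ℂ A) ((map LinearMap.id ψ) t))
        = (TensorProduct.rid ℂ (A ⊗[ℂ] A))
            ((map LinearMap.id ψ) ((map W.Δ LinearMap.id) t)) := by
    intro t
    induction t using TensorProduct.induction_on with
    | zero => simp
    | tmul x y => simp
    | add u v hu hv => simp only [map_add, hu, hv]
  have e3 : ∀ s t : A ⊗[ℂ] A,
      (TensorProduct.rid ℂ (A ⊗[ℂ] A))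
        ((map LinearMap.id ψ)
          ((s ⊗ₜ (1:A)) * ((TensorProduct.assoc ℂ A A A).symm ((1:A) ⊗ₜ t))))
        = s * ((1:A) ⊗ₜ ((TensorProduct.rid ℂ A) ((map LinearMap.id ψ) t))) := by
    intro s t
    induction s using TensorProduct.induction_on with
    | zero => simp [TensorProduct.zero_tmul]
    | tmul p q =>
      induction t using TensorProduct.induction_on with
      | zero => simp
      | tmul x y =>
        rw [TensorProduct.assoc_symm_tmul]
        rw [show (((p ⊗ₜ[ℂ] q) ⊗ₜ[ℂ] (1:A)) * (((1:A) ⊗ₜ[ℂ] x) ⊗ₜ[ℂ] y))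
            = ((p ⊗ₜ[ℂ] (q*x)) ⊗ₜ[ℂ] y) from by
          rw [Algebra.TensorProduct.tmul_mul_tmul, Algebra.TensorProduct.tmul_mul_tmul,
            mul_one, one_mul]]
        simp only [map_tmul, LinearMap.id_apply, TensorProduct.rid_tmul,
          Algebra.TensorProduct.tmul_mul_tmul, mul_one, one_mul]
        rw [mul_smul_comm, TensorProduct.tmul_smul]
      | add u v hu hv =>
        simp only [TensorProduct.tmul_add, map_add, mul_add, hu, hv]
    | add u v hu hv =>
      simp only [TensorProduct.add_tmul, add_mul, map_add, hu, hv]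
  have h0 : W.Δ (W.arS ψ)
      = (TensorProduct.rid ℂ (A ⊗[ℂ] A))
          ((map LinearMap.id ψ) ((map W.Δ LinearMap.id) (W.Δ 1))) := e0 (W.Δ 1)
  rw [h0, ← W.unit_weak, e3]
  rfl

end WeakHopfAlgebra

end AuxWHA3

section AuxWHA4

set_option maxHeartbeats 1600000
set_option synthInstance.maxHeartbeats 400000
set_option linter.unusedSectionVars false

open TensorProduct LinearMap

variable {A : Type} [Ring A] [Algebra ℂ A] [StarRing A] [StarModule ℂ A]

namespace WeakHopfAlgebra

variable (W : WeakHopfAlgebra A)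

/-- The slice lemma: to check an identity at `Δ 1`, it suffices to check it on
pure tensors whose second leg lies in `A_L`. -/
lemma SL {V : Type} [AddCommGroup V] [Module ℂ V] (F G : A ⊗[ℂ] A →ₗ[ℂ] V)
    (h : ∀ x y, y ∈ W.AL → F (x ⊗ₜ y) = G (x ⊗ₜ y)) : F (W.Δ 1) = G (W.Δ 1) := by
  haveI := W.finite
  set b := Module.finBasis ℂ A with hb
  have rep : ∀ t : A ⊗[ℂ] A,
      t = ∑ i, b i ⊗ₜ[ℂ] ((TensorProduct.lid ℂ A) ((map (b.coord i) LinearMap.id) t)) := by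
    intro t
    induction t using TensorProduct.induction_on with
    | zero => simp
    | tmul x y =>
      have : ∀ i, b i ⊗ₜ[ℂ]
          ((TensorProduct.lid ℂ A) ((map (b.coord i) LinearMap.id) (x ⊗ₜ[ℂ] y)))
          = (b.repr x i • b i) ⊗ₜ[ℂ] y := by
        intro i
        simp only [map_tmul, TensorProduct.lid_tmul, LinearMap.id_apply, Module.Basis.coord_apply]
        rw [TensorProduct.tmul_smul, TensorProduct.smul_tmul']
      rw [Finset.sum_congr rfl (fun i _ => this i), ← TensorProduct.sum_tmul, b.sum_repr x]
    | add u v hu hv =>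
      conv_lhs => rw [hu, hv]
      simp only [map_add, TensorProduct.tmul_add, Finset.sum_add_distrib]
  conv_lhs => rw [rep (W.Δ 1)]
  conv_rhs => rw [rep (W.Δ 1)]
  rw [map_sum, map_sum]
  refine Finset.sum_congr rfl fun i _ => h _ _ ⟨b.coord i, rfl⟩

lemma Qlem (ψ : A →ₗ[ℂ] ℂ) :
    LinearMap.mul' ℂ A ((map (mulRight ℂ (W.arS ψ) ∘ₗ W.S) LinearMap.id) (W.Δ 1))
      = W.arS ψ := by
  have h := W.SL (LinearMap.mul' ℂ A ∘ₗ (map (mulRight ℂ (W.arS ψ) ∘ₗ W.S) LinearMap.id))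
      (mulRight ℂ (W.arS ψ) ∘ₗ LinearMap.mul' ℂ A ∘ₗ (map W.S LinearMap.id))
      (by
        intro x y hy
        obtain ⟨φ, hφ⟩ := hy
        simp only [LinearMap.comp_apply, map_tmul, LinearMap.mul'_apply,
          LinearMap.mulRight_apply, LinearMap.id_apply]
        rw [mul_assoc, mul_assoc]
        congr 1
        rw [hφ]
        exact (W.AL_AR_comm φ ψ).symm)
  simpa only [LinearMap.comp_apply, LinearMap.mulRight_apply] using
    h.trans (by
      simp only [LinearMap.comp_apply, LinearMap.mulRight_apply]
      have : LinearMap.mul' ℂ A ((map W.S LinearMap.id) (W.Δ 1)) = W.swr 1 := rfl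
      rw [this, W.swr_one, one_mul])

lemma S_injective : Function.Injective W.S := by
  intro u v h
  rw [← W.Sinv_S u, h, W.Sinv_S]

lemma Sinv_antimul (x y : A) : W.Sinv (x * y) = W.Sinv y * W.Sinv x := by
  apply W.S_injective
  rw [W.S_Sinv, W.S_antimul, W.S_Sinv, W.S_Sinv]

lemma S_swl (y : A) : W.S (W.swl y) = W.swr (W.S y) := by
  have e : ∀ t : A ⊗[ℂ] A,
      W.S (LinearMap.mul' ℂ A ((map LinearMap.id W.S) t))
        = LinearMap.mul' ℂ A
            ((map W.S LinearMap.id) ((TensorProduct.comm ℂ A A) ((map W.S W.S) t))) := by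
    intro t
    induction t using TensorProduct.induction_on with
    | zero => simp
    | tmul p q =>
      simp only [map_tmul, LinearMap.mul'_apply, LinearMap.id_apply,
        TensorProduct.comm_tmul]
      exact W.S_antimul p (W.S q)
    | add u v hu hv => simp only [map_add, hu, hv]
  have h1 : W.S (W.swl y)
      = LinearMap.mul' ℂ A
          ((map W.S LinearMap.id) ((TensorProduct.comm ℂ A A) ((map W.S W.S) (W.Δ y)))) :=
    e (W.Δ y)
  rw [h1, ← W.S_anticomul]
  rfl

lemma comm_comm' (t : A ⊗[ℂ] A) :
    (TensorProduct.comm ℂ A A) ((TensorProduct.comm ℂ A A) t) = t := by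
  induction t using TensorProduct.induction_on with
  | zero => simp
  | tmul p q => simp [TensorProduct.comm_tmul]
  | add u v hu hv => simp only [map_add, hu, hv]

lemma mapSinv_mapS (t : A ⊗[ℂ] A) :
    (map W.Sinv W.Sinv) ((map W.S W.S) t) = t := by
  induction t using TensorProduct.induction_on with
  | zero => simp
  | tmul p q => simp [W.Sinv_S]
  | add u v hu hv => simp only [map_add, hu, hv]

lemma delta_Sinv (z : A) :
    W.Δ (W.Sinv z) = (map W.Sinv W.Sinv) ((TensorProduct.comm ℂ A A) (W.Δ z)) := by
  have h := W.S_anticomul (W.Sinv z)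
  rw [W.S_Sinv] at h
  rw [h, comm_comm', W.mapSinv_mapS]

lemma swl_Sinv (z : A) : W.swl (W.Sinv z) = W.Sinv (W.swr z) := by
  have e : ∀ t : A ⊗[ℂ] A,
      LinearMap.mul' ℂ A
          ((map LinearMap.id W.S)
            ((map W.Sinv W.Sinv) ((TensorProduct.comm ℂ A A) t)))
        = W.Sinv (LinearMap.mul' ℂ A ((map W.S LinearMap.id) t)) := by
    intro t
    induction t using TensorProduct.induction_on with
    | zero => simp
    | tmul p q =>
      simp only [TensorProduct.comm_tmul, map_tmul, LinearMap.mul'_apply,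
        LinearMap.id_apply]
      rw [W.S_Sinv, W.Sinv_antimul, W.Sinv_S]
    | add u v hu hv => simp only [map_add, hu, hv]
  have h1 : W.swl (W.Sinv z)
      = LinearMap.mul' ℂ A ((map LinearMap.id W.S) (W.Δ (W.Sinv z))) := rfl
  rw [h1, W.delta_Sinv, e (W.Δ z)]
  rfl

lemma swr_swl (y : A) : W.swr (W.swl y) = W.S (W.swl y) := by
  have h1 : W.Δ (W.swl y) = (W.swl y ⊗ₜ (1:A)) * W.Δ 1 := by
    rw [W.swl_slice y]
    exact W.delta_alS _
  have e : ∀ (w : A) (t : A ⊗[ℂ] A),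
      LinearMap.mul' ℂ A ((map W.S LinearMap.id) ((w ⊗ₜ (1:A)) * t))
        = LinearMap.mul' ℂ A ((map (mulRight ℂ (W.S w) ∘ₗ W.S) LinearMap.id) t) := by
    intro w t
    induction t using TensorProduct.induction_on with
    | zero => simp
    | tmul p q =>
      rw [Algebra.TensorProduct.tmul_mul_tmul]
      simp only [map_tmul, LinearMap.mul'_apply, LinearMap.id_apply, LinearMap.comp_apply,
        LinearMap.mulRight_apply, one_mul]
      rw [W.S_antimul]
    | add u v hu hv => simp only [mul_add, map_add, hu, hv]
  have h2 : W.S (W.swl y) = W.arS (W.ε ∘ₗ mulLeft ℂ (W.S y)) := by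
    rw [W.S_swl, W.swr_slice]
  have h3 : W.swr (W.swl y)
      = LinearMap.mul' ℂ A ((map W.S LinearMap.id) (W.Δ (W.swl y))) := rfl
  rw [h3, h1, e, h2, W.Qlem]

lemma star_swr_star (y : A) : star (W.swr (star y)) = W.Sinv (W.swl y) := by
  have e : ∀ t : A ⊗[ℂ] A,
      star (LinearMap.mul' ℂ A ((map W.S LinearMap.id) (tensorStar A A t)))
        = W.Sinv (LinearMap.mul' ℂ A ((map LinearMap.id W.S) t)) := by
    intro t
    induction t using TensorProduct.induction_on with
    | zero => simp
    | tmul p q =>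
      rw [show tensorStar A A (p ⊗ₜ[ℂ] q) = star p ⊗ₜ[ℂ] star q from
        TensorProduct.liftAddHom_tmul _ _ p q]
      simp only [map_tmul, LinearMap.mul'_apply, LinearMap.id_apply]
      rw [star_mul, star_star, W.S_star, W.Sinv_antimul, W.Sinv_S]
    | add u v hu hv =>
      simp only [map_add, star_add, hu, hv]
  have h1 : star (W.swr (star y))
      = star (LinearMap.mul' ℂ A ((map W.S LinearMap.id) (W.Δ (star y)))) := rfl
  rw [h1, W.Δ_star, e (W.Δ y)]
  rfl

lemma swl_alS (φ : A →ₗ[ℂ] ℂ) : W.swl (W.alS φ) = W.alS φ := by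
  have e : ∀ t : A ⊗[ℂ] A,
      W.swl ((TensorProduct.lid ℂ A) ((map φ LinearMap.id) t))
        = (TensorProduct.lid ℂ A) ((map φ LinearMap.id) ((map LinearMap.id W.swl) t)) := by
    intro t
    induction t using TensorProduct.induction_on with
    | zero => simp
    | tmul x y => simp
    | add u v hu hv => simp only [map_add, hu, hv]
  have h : W.swl (W.alS φ)
      = (TensorProduct.lid ℂ A) ((map φ LinearMap.id) ((map LinearMap.id W.swl) (W.Δ 1))) :=
    e (W.Δ 1)
  rw [h, W.I2_one]
  rfl

lemma stL1 : ∀ (s : A ⊗[ℂ] A) (x y : A),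
    (TensorProduct.lid ℂ A) ((map W.ε LinearMap.id) (s * (x ⊗ₜ y)))
      = ((TensorProduct.lid ℂ A) ((map (W.ε ∘ₗ mulRight ℂ x) LinearMap.id) s)) * y := by
  intro s x y
  induction s using TensorProduct.induction_on with
  | zero => simp [zero_mul]
  | tmul p q =>
    rw [Algebra.TensorProduct.tmul_mul_tmul]
    simp only [map_tmul, TensorProduct.lid_tmul, LinearMap.id_apply, LinearMap.comp_apply,
      LinearMap.mulRight_apply]
    rw [smul_mul_assoc]
  | add u v hu hv => simp only [add_mul, map_add, hu, hv, LinearMap.add_apply]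

lemma swl_mul (t : A ⊗[ℂ] A) :
    LinearMap.mul' ℂ A ((map W.swl LinearMap.id) t)
      = (TensorProduct.lid ℂ A) ((map W.ε LinearMap.id) (W.Δ 1 * t)) := by
  induction t using TensorProduct.induction_on with
  | zero => simp
  | tmul x y =>
    rw [W.stL1 (W.Δ 1) x y]
    simp only [map_tmul, LinearMap.mul'_apply, LinearMap.id_apply]
    congr 1
    exact W.swl_slice x
  | add u v hu hv => simp only [mul_add, map_add, hu, hv]

lemma starL (c : A) : LinearMap.mul' ℂ A ((map W.swl LinearMap.id) (W.Δ c)) = c := by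
  rw [W.swl_mul, ← W.Δ_one_mul]
  exact W.counit_left c

lemma starL' (c a : A) :
    LinearMap.mul' ℂ A ((map W.swl (mulRight ℂ a)) (W.Δ c)) = c * a := by
  have e : ∀ t : A ⊗[ℂ] A,
      LinearMap.mul' ℂ A ((map W.swl (mulRight ℂ a)) t)
        = LinearMap.mul' ℂ A ((map W.swl LinearMap.id) t) * a := by
    intro t
    induction t using TensorProduct.induction_on with
    | zero => simp
    | tmul x y =>
      simp only [map_tmul, LinearMap.mul'_apply, LinearMap.mulRight_apply,
        LinearMap.id_apply]
      rw [mul_assoc]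
    | add u v hu hv => simp only [map_add, hu, hv, add_mul]
  rw [e, W.starL]

end WeakHopfAlgebra

end AuxWHA4

section AuxMod

set_option maxHeartbeats 1600000
set_option synthInstance.maxHeartbeats 400000
set_option linter.unusedSectionVars false

open TensorProduct LinearMap

variable {A : Type} [Ring A] [Algebra ℂ A] [StarRing A] [StarModule ℂ A]
variable {M : Type} [Ring M] [Algebra ℂ M] [StarRing M] [StarModule ℂ M]
variable {W : WeakHopfAlgebra A} (MA : ModuleAlgebra W M)

namespace ModuleAlgebra

/-- Left multiplication by `x ▷ 1` is the action of `swl x`. -/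
lemma LM (x : A) (u : M) : MA.act x 1 * u = MA.act (W.swl x) u := by
  -- Φ₀
  set g : A ⊗[ℂ] A →ₗ[ℂ] M :=
    MA.act.flip u ∘ₗ LinearMap.mul' ℂ A ∘ₗ map LinearMap.id W.S with hg
  set Φ₀ : A ⊗[ℂ] A →ₗ[ℂ] M :=
    (TensorProduct.lift MA.act) ∘ₗ (map LinearMap.id (MA.act.flip u ∘ₗ W.S)) with hΦ₀
  set Φ₃ : A ⊗[ℂ] (A ⊗[ℂ] A) →ₗ[ℂ] M :=
    LinearMap.mul' ℂ M ∘ₗ map (MA.act.flip 1) g with hΦ₃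
  have e1 : ∀ t : A ⊗[ℂ] A,
      MA.act (LinearMap.mul' ℂ A ((map LinearMap.id W.S) t)) u = Φ₀ t := by
    intro t
    induction t using TensorProduct.induction_on with
    | zero => simp [hΦ₀]
    | tmul p q =>
      simp only [hΦ₀, map_tmul, LinearMap.mul'_apply, LinearMap.id_apply,
        LinearMap.comp_apply, TensorProduct.lift.tmul, LinearMap.flip_apply]
      exact MA.act_mul p (W.S q) u
    | add s t hs ht =>
      simp only [map_add, LinearMap.add_apply, hs, ht]
  have e2' : ∀ (s : A ⊗[ℂ] A) (q : A),
      Φ₃ ((TensorProduct.assoc ℂ A A A) (s ⊗ₜ q))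
        = LinearMap.mul' ℂ M
            ((map (MA.act.flip 1) (MA.act.flip (MA.act (W.S q) u))) s) := by
    intro s q
    induction s using TensorProduct.induction_on with
    | zero => simp
    | tmul p1 p2 =>
      rw [TensorProduct.assoc_tmul]
      simp only [hΦ₃, hg, LinearMap.comp_apply, map_tmul, LinearMap.mul'_apply,
        LinearMap.flip_apply, LinearMap.id_apply]
      congr 1
      exact MA.act_mul p2 (W.S q) u
    | add s t hs ht =>
      simp only [TensorProduct.add_tmul, map_add, hs, ht]
  have e3 : ∀ t : A ⊗[ℂ] A,
      Φ₀ t = Φ₃ ((TensorProduct.assoc ℂ A A A) ((map W.Δ LinearMap.id) t)) := by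
    intro t
    induction t using TensorProduct.induction_on with
    | zero => simp
    | tmul p q =>
      rw [map_tmul, LinearMap.id_apply, e2']
      simp only [hΦ₀, map_tmul, LinearMap.comp_apply, TensorProduct.lift.tmul,
        LinearMap.flip_apply, LinearMap.id_apply]
      rw [show MA.act p (MA.act (W.S q) u) = MA.act p (1 * MA.act (W.S q) u) from by
        rw [one_mul]]
      exact MA.act_mul' p 1 (MA.act (W.S q) u)
    | add s t hs ht =>
      simp only [map_add, hs, ht]
  have e4 : ∀ t : A ⊗[ℂ] A,
      Φ₃ ((map LinearMap.id W.Δ) t)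
        = LinearMap.mul' ℂ M ((map (MA.act.flip 1) (MA.act.flip u))
            ((map LinearMap.id W.swl) t)) := by
    intro t
    induction t using TensorProduct.induction_on with
    | zero => simp
    | tmul p q =>
      simp only [hΦ₃, hg, LinearMap.comp_apply, map_tmul, LinearMap.id_apply]
      rfl
    | add s t hs ht => simp only [map_add, hs, ht]
  have e6 : ∀ (t : A ⊗[ℂ] A) (x : A),
      LinearMap.mul' ℂ M ((map (MA.act.flip 1) (MA.act.flip u)) (t * (x ⊗ₜ (1:A))))
        = LinearMap.mul' ℂ M
            ((map (MA.act.flip (MA.act x 1)) (MA.act.flip u)) t) := by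
    intro t x
    induction t using TensorProduct.induction_on with
    | zero => simp [zero_mul]
    | tmul p q =>
      rw [Algebra.TensorProduct.tmul_mul_tmul, mul_one]
      simp only [map_tmul, LinearMap.mul'_apply, LinearMap.flip_apply]
      congr 1
      exact MA.act_mul p x 1
    | add s t hs ht => simp only [add_mul, map_add, hs, ht]
  have h1 : MA.act (W.swl x) u = Φ₀ (W.Δ x) := e1 (W.Δ x)
  rw [h1, e3, W.coassoc, e4, W.I2, e6]
  have h2 : LinearMap.mul' ℂ M
      ((map (MA.act.flip (MA.act x 1)) (MA.act.flip u)) (W.Δ 1))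
      = MA.act 1 (MA.act x 1 * u) := (MA.act_mul' 1 (MA.act x 1) u).symm
  rw [h2, MA.act_one]

/-- Right multiplication by `y ▷ 1` is the action of `S⁻¹(swl y)`. -/
lemma RM (y : A) (v : M) : v * MA.act y 1 = MA.act (W.Sinv (W.swl y)) v := by
  have h := MA.LM (W.Sinv (star y)) (star v)
  have hstar := congrArg star h
  rw [star_mul] at hstar
  have h1 : star (MA.act (W.Sinv (star y)) 1) = MA.act y 1 := by
    rw [MA.act_star, star_one, W.S_Sinv, star_star]
  have h2 : star (MA.act (W.swl (W.Sinv (star y))) (star v))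
      = MA.act (W.Sinv (W.swl y)) v := by
    rw [MA.act_star, star_star]
    congr 1
    rw [W.S_swl, W.S_Sinv, W.star_swr_star]
  rw [star_star, h1, h2] at hstar
  exact hstar

lemma fixed_actL {n : M} (hn : n ∈ MA.fixed) (x : A) :
    MA.act x n = MA.act x 1 * n := by
  have := hn x 1
  rwa [one_mul] at this

lemma act_unit' (x : A) : MA.act x 1 = MA.act (W.swl x) 1 := MA.act_unit x

lemma act_Sinv_swl {n : M} (hn : n ∈ MA.fixed) (x : A) :
    MA.act (W.Sinv (W.swl x)) n = MA.act x n := by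
  rw [MA.fixed_actL hn, MA.fixed_actL hn]
  congr 1
  rw [MA.act_unit' (W.Sinv (W.swl x)), W.swl_Sinv, W.swr_swl, W.Sinv_S,
    ← MA.act_unit' x]

end ModuleAlgebra

end AuxMod

section AuxCross

set_option maxHeartbeats 1600000
set_option synthInstance.maxHeartbeats 400000
set_option linter.unusedSectionVars false

open TensorProduct LinearMap

namespace CPR

variable {A : Type} [Ring A] [Algebra ℂ A] [StarRing A] [StarModule ℂ A]
variable {M : Type} [Ring M] [Algebra ℂ M] [StarRing M] [StarModule ℂ M]
variable {W : WeakHopfAlgebra A} {MA : ModuleAlgebra W M}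

lemma iA_apply (a : A) : iA MA a = cmk MA ((1:M) ⊗ₜ a) := rfl
lemma iM_apply (m : M) : iM MA m = cmk MA (m ⊗ₜ (1:A)) := rfl

lemma rel (m : M) (b a : A) (hb : b ∈ W.AL) :
    cmk MA ((m * MA.act b 1) ⊗ₜ a) = cmk MA (m ⊗ₜ (b * a)) := by
  show (crossedRel MA).mkQ _ = (crossedRel MA).mkQ _
  rw [Submodule.mkQ_apply, Submodule.mkQ_apply, Submodule.Quotient.eq]
  exact Submodule.subset_span ⟨m, a, b, hb, rfl⟩

lemma T1 (m : M) (x y : A) :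
    cmk MA ((m * MA.act x 1) ⊗ₜ y) = cmk MA (m ⊗ₜ (W.swl x * y)) := by
  rw [show MA.act x 1 = MA.act (W.swl x) 1 from MA.act_unit x,
    rel m (W.swl x) y (W.swl_mem_AL x)]

lemma Hlem (b a : A) (hb : b ∈ W.AL) :
    MA.act b 1 * MA.act a 1 = MA.act (b * a) 1 := by
  rw [MA.LM b (MA.act a 1), ← MA.act_mul]
  obtain ⟨φ, hφ⟩ := W.mem_AL_iff.mp hb
  rw [hφ, W.swl_alS]

/-- The retraction `m ⋊ a ↦ m (a ▷ 1)`. -/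
def rbar (MA : ModuleAlgebra W M) : Crossed MA →ₗ[ℂ] M :=
  Submodule.liftQ (crossedRel MA)
    (LinearMap.mul' ℂ M ∘ₗ (map LinearMap.id (MA.act.flip 1)))
    (by
      unfold crossedRel
      rw [Submodule.span_le]
      rintro x ⟨m, a, b, hb, rfl⟩
      simp only [SetLike.mem_coe, LinearMap.mem_ker, map_sub, LinearMap.comp_apply,
        map_tmul, LinearMap.id_apply, LinearMap.mul'_apply, LinearMap.flip_apply]
      rw [mul_assoc, Hlem b a hb, sub_self])

lemma rbar_cmk (m : M) (a : A) :
    rbar MA (cmk MA (m ⊗ₜ a)) = m * MA.act a 1 := by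
  show Submodule.liftQ _ _ _ ((crossedRel MA).mkQ _) = _
  rw [Submodule.mkQ_apply, Submodule.liftQ_apply]
  simp

lemma iM_inj {m m' : M} (h : iM MA m = iM MA m') : m = m' := by
  have h2 := congrArg (rbar MA) h
  rw [iM_apply, iM_apply, rbar_cmk, rbar_cmk, MA.act_one, mul_one, mul_one] at h2
  exact h2

lemma crossed_ind {P : Crossed MA → Prop} (h0 : P 0)
    (ht : ∀ m a, P (cmk MA (m ⊗ₜ a))) (ha : ∀ u v, P u → P v → P (u + v)) :
    ∀ y : Crossed MA, P y := by
  intro y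
  obtain ⟨t, rfl⟩ := Submodule.mkQ_surjective (crossedRel MA) y
  show P (cmk MA t)
  induction t using TensorProduct.induction_on with
  | zero => rw [map_zero]; exact h0
  | tmul m a => exact ht m a
  | add u v hu hv => rw [map_add]; exact ha _ _ hu hv

variable (CS : CrossedMul MA)

lemma KEY1pure (m : M) (c a : A) :
    CS.mul (cmk MA (m ⊗ₜ c)) (cmk MA ((1:M) ⊗ₜ a)) = cmk MA (m ⊗ₜ (c * a)) := by
  rw [CS.mul_def]
  have e : ∀ t : A ⊗[ℂ] A,
      (cmk MA ∘ₗ (map ((LinearMap.mulLeft ℂ m) ∘ₗ (MA.act.flip 1))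
          (LinearMap.mulRight ℂ a))) t
        = (cmk MA ∘ₗ (TensorProduct.mk ℂ M A m) ∘ₗ LinearMap.mul' ℂ A
            ∘ₗ (map W.swl (LinearMap.mulRight ℂ a))) t := by
    intro t
    induction t using TensorProduct.induction_on with
    | zero => simp
    | tmul x y =>
      simp only [LinearMap.comp_apply, map_tmul, LinearMap.mulLeft_apply,
        LinearMap.mulRight_apply, LinearMap.flip_apply, LinearMap.mul'_apply,
        TensorProduct.mk_apply]
      exact T1 m x (y * a)
    | add u v hu hv => simp only [map_add, hu, hv]
  have h := e (W.Δ c)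
  simp only [LinearMap.comp_apply] at h
  rw [h, W.starL']
  rfl

lemma KEY1t (t : M ⊗[ℂ] A) (a : A) :
    CS.mul (cmk MA t) (iA MA a)
      = cmk MA ((map LinearMap.id (LinearMap.mulRight ℂ a)) t) := by
  induction t using TensorProduct.induction_on with
  | zero => rw [map_zero, LinearMap.map_zero₂, map_zero, map_zero]
  | tmul m c =>
    rw [iA_apply, KEY1pure CS, map_tmul]
    rfl
  | add u v hu hv => simp only [map_add, LinearMap.add_apply, hu, hv]

lemma KEY2 (a : A) (m' : M) (c : A) :
    CS.mul (iA MA a) (cmk MA (m' ⊗ₜ c))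
      = cmk MA ((map (MA.act.flip m') (LinearMap.mulRight ℂ c)) (W.Δ a)) := by
  rw [iA_apply, CS.mul_def, LinearMap.mulLeft_one, LinearMap.id_comp]

lemma KEY3 (m₀ m' : M) (w : A) :
    cmk MA ((map ((LinearMap.mulLeft ℂ m₀) ∘ₗ (MA.act.flip m'))
        (LinearMap.mulRight ℂ w)) (W.Δ 1))
      = cmk MA ((m₀ * m') ⊗ₜ w) := by
  have h := W.SL
      (cmk MA ∘ₗ (map ((LinearMap.mulLeft ℂ m₀) ∘ₗ (MA.act.flip m'))
        (LinearMap.mulRight ℂ w)))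
      (cmk MA ∘ₗ ((TensorProduct.mk ℂ M A).flip w) ∘ₗ LinearMap.mul' ℂ M
        ∘ₗ (map ((LinearMap.mulLeft ℂ m₀) ∘ₗ (MA.act.flip m')) (MA.act.flip 1)))
      (by
        intro x y hy
        simp only [LinearMap.comp_apply, map_tmul, LinearMap.mulLeft_apply,
          LinearMap.mulRight_apply, LinearMap.flip_apply, LinearMap.mul'_apply,
          TensorProduct.mk_apply]
        exact (rel (m₀ * MA.act x m') y w hy).symm)
  simp only [LinearMap.comp_apply] at h
  rw [h]
  have e : ∀ t : A ⊗[ℂ] A,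
      LinearMap.mul' ℂ M
          ((map ((LinearMap.mulLeft ℂ m₀) ∘ₗ (MA.act.flip m')) (MA.act.flip 1)) t)
        = m₀ * LinearMap.mul' ℂ M ((map (MA.act.flip m') (MA.act.flip 1)) t) := by
    intro t
    induction t using TensorProduct.induction_on with
    | zero => simp
    | tmul x y =>
      simp only [map_tmul, LinearMap.comp_apply, LinearMap.mulLeft_apply,
        LinearMap.mul'_apply, LinearMap.flip_apply]
      rw [mul_assoc]
    | add u v hu hv => simp only [map_add, hu, hv, mul_add]
  rw [e, show LinearMap.mul' ℂ M ((map (MA.act.flip m') (MA.act.flip 1)) (W.Δ 1))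
      = MA.act 1 (m' * 1) from (MA.act_mul' 1 m' 1).symm, MA.act_one, mul_one]
  rfl

lemma part1 (a : A) (m : M) :
    iM MA (MA.act a m)
      = TensorProduct.lift
          (CS.mul.compl₁₂ ((CS.mul.flip (iM MA m)) ∘ₗ iA MA) (iA MA ∘ₗ W.S)) (W.Δ a) := by
  have eIn : ∀ (s : A ⊗[ℂ] A) (y : A),
      (map LinearMap.id (LinearMap.mulRight ℂ (W.S y)))
          ((map (MA.act.flip m) (LinearMap.mulRight ℂ (1:A))) s)
        = (map (MA.act.flip m) (LinearMap.mul' ℂ A ∘ₗ map LinearMap.id W.S))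
            ((TensorProduct.assoc ℂ A A A) (s ⊗ₜ y)) := by
    intro s y
    induction s using TensorProduct.induction_on with
    | zero => simp
    | tmul x1 x2 =>
      rw [TensorProduct.assoc_tmul]
      simp only [map_tmul, LinearMap.id_apply, LinearMap.mulRight_apply,
        LinearMap.comp_apply, LinearMap.mul'_apply, mul_one]
    | add u v hu hv =>
      simp only [map_add, TensorProduct.add_tmul, hu, hv]
  have eF : ∀ t : A ⊗[ℂ] A,
      TensorProduct.lift
          (CS.mul.compl₁₂ ((CS.mul.flip (iM MA m)) ∘ₗ iA MA) (iA MA ∘ₗ W.S)) t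
        = (cmk MA ∘ₗ (map (MA.act.flip m) (LinearMap.mul' ℂ A ∘ₗ map LinearMap.id W.S))
            ∘ₗ (TensorProduct.assoc ℂ A A A).toLinearMap ∘ₗ (map W.Δ LinearMap.id)) t := by
    intro t
    induction t using TensorProduct.induction_on with
    | zero => simp
    | tmul x y =>
      rw [TensorProduct.lift.tmul]
      simp only [LinearMap.compl₁₂_apply, LinearMap.comp_apply, LinearMap.flip_apply,
        map_tmul, LinearMap.id_apply, LinearEquiv.coe_coe]
      rw [iM_apply, KEY2 CS x m 1, KEY1t CS, eIn (W.Δ x) y]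
    | add u v hu hv => simp only [map_add, hu, hv]
  rw [eF (W.Δ a)]
  simp only [LinearMap.comp_apply, LinearEquiv.coe_coe]
  rw [W.coassoc]
  have e2 : ∀ t : A ⊗[ℂ] A,
      (map (MA.act.flip m) (LinearMap.mul' ℂ A ∘ₗ map LinearMap.id W.S))
          ((map LinearMap.id W.Δ) t)
        = (map (MA.act.flip m) W.swl) t := by
    intro t
    induction t using TensorProduct.induction_on with
    | zero => simp
    | tmul p q => simp only [map_tmul, LinearMap.id_apply, LinearMap.comp_apply]; rfl
    | add u v hu hv => simp only [map_add, hu, hv]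
  rw [e2]
  have e3 : ∀ t : A ⊗[ℂ] A,
      (cmk MA ∘ₗ (map (MA.act.flip m) W.swl)) t
        = (cmk MA ∘ₗ ((TensorProduct.mk ℂ M A).flip 1) ∘ₗ LinearMap.mul' ℂ M
            ∘ₗ (map (MA.act.flip m) (MA.act.flip 1))) t := by
    intro t
    induction t using TensorProduct.induction_on with
    | zero => simp
    | tmul x y =>
      simp only [LinearMap.comp_apply, map_tmul, LinearMap.flip_apply,
        LinearMap.mul'_apply, TensorProduct.mk_apply]
      have := T1 (MA := MA) (MA.act x m) y 1
      rw [mul_one] at this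
      exact this.symm
    | add u v hu hv => simp only [map_add, hu, hv]
  have h3 := e3 (W.Δ a)
  simp only [LinearMap.comp_apply] at h3
  rw [h3, show LinearMap.mul' ℂ M ((map (MA.act.flip m) (MA.act.flip 1)) (W.Δ a))
      = MA.act a (m * 1) from (MA.act_mul' a m 1).symm, mul_one]
  rfl

lemma part2 (a : A) (n : M) (hn : n ∈ MA.fixed) :
    CS.mul (iA MA a) (iM MA n) = CS.mul (iM MA n) (iA MA a) := by
  have hR : CS.mul (iM MA n) (iA MA a) = cmk MA (n ⊗ₜ a) := by
    rw [iM_apply, iA_apply, KEY1pure CS, one_mul]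
  have hL : CS.mul (iA MA a) (iM MA n)
      = cmk MA ((map (MA.act.flip n) (LinearMap.mulRight ℂ (1:A))) (W.Δ a)) := by
    rw [iM_apply]; exact KEY2 CS a n 1
  rw [hL, hR]
  have e : ∀ t : A ⊗[ℂ] A,
      (cmk MA ∘ₗ (map (MA.act.flip n) (LinearMap.mulRight ℂ (1:A)))) t
        = (cmk MA ∘ₗ (TensorProduct.mk ℂ M A n) ∘ₗ LinearMap.mul' ℂ A
            ∘ₗ (map W.swl LinearMap.id)) t := by
    intro t
    induction t using TensorProduct.induction_on with
    | zero => simp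
    | tmul x y =>
      simp only [LinearMap.comp_apply, map_tmul, LinearMap.flip_apply,
        LinearMap.mulRight_apply, LinearMap.mul'_apply, TensorProduct.mk_apply,
        LinearMap.id_apply, mul_one]
      calc cmk MA (MA.act x n ⊗ₜ y)
          = cmk MA ((MA.act (W.Sinv (W.swl x)) n) ⊗ₜ y) := by rw [MA.act_Sinv_swl hn]
        _ = cmk MA ((n * MA.act x 1) ⊗ₜ y) := by rw [← MA.RM x n]
        _ = cmk MA (n ⊗ₜ (W.swl x * y)) := T1 n x y
    | add u v hu hv => simp only [map_add, hu, hv]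
  have h := e (W.Δ a)
  simp only [LinearMap.comp_apply] at h
  rw [h, W.starL a]
  rfl

lemma part3 (a : A) (ha : a ∈ W.AR) (m : M) :
    CS.mul (iA MA a) (iM MA m) = CS.mul (iM MA m) (iA MA a) := by
  have hR : CS.mul (iM MA m) (iA MA a) = cmk MA (m ⊗ₜ a) := by
    rw [iM_apply, iA_apply, KEY1pure CS, one_mul]
  have hL : CS.mul (iA MA a) (iM MA m)
      = cmk MA ((map (MA.act.flip m) (LinearMap.mulRight ℂ (1:A))) (W.Δ a)) := by
    rw [iM_apply]; exact KEY2 CS a m 1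
  obtain ⟨ψ, hψ⟩ := W.mem_AR_iff.mp ha
  have hΔ : W.Δ a = W.Δ 1 * ((1:A) ⊗ₜ a) := by
    conv_lhs => rw [hψ]
    rw [W.delta_arS ψ, ← hψ]
  rw [hL, hR, hΔ, WeakHopfAlgebra.mul_one_tmul_right]
  have e : ∀ t : A ⊗[ℂ] A,
      (map (MA.act.flip m) (LinearMap.mulRight ℂ (1:A)))
          ((map LinearMap.id (LinearMap.mulRight ℂ a)) t)
        = (map ((LinearMap.mulLeft ℂ (1:M)) ∘ₗ (MA.act.flip m))
            (LinearMap.mulRight ℂ a)) t := by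
    intro t
    induction t using TensorProduct.induction_on with
    | zero => simp
    | tmul x y =>
      simp only [map_tmul, LinearMap.id_apply, LinearMap.mulRight_apply,
        LinearMap.comp_apply, LinearMap.mulLeft_apply, LinearMap.flip_apply, mul_one,
        one_mul]
    | add u v hu hv => simp only [map_add, hu, hv]
  rw [e, KEY3 1 m a, one_mul]

lemma part4 (a : A) (ha : a ∈ W.AR ∩ centerSet A) :
    ∀ y : Crossed MA, CS.mul (iA MA a) y = CS.mul y (iA MA a) := by
  obtain ⟨haR, haC⟩ := ha
  refine crossed_ind ?_ ?_ ?_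
  · rw [map_zero, LinearMap.map_zero₂]
  · intro m c
    have hL : CS.mul (iA MA a) (cmk MA (m ⊗ₜ c)) = cmk MA (m ⊗ₜ (a * c)) := by
      rw [KEY2 CS a m c]
      obtain ⟨ψ, hψ⟩ := W.mem_AR_iff.mp haR
      have hΔ : W.Δ a = W.Δ 1 * ((1:A) ⊗ₜ a) := by
        conv_lhs => rw [hψ]
        rw [W.delta_arS ψ, ← hψ]
      rw [hΔ, WeakHopfAlgebra.mul_one_tmul_right]
      have e : ∀ t : A ⊗[ℂ] A,
          (map (MA.act.flip m) (LinearMap.mulRight ℂ c))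
              ((map LinearMap.id (LinearMap.mulRight ℂ a)) t)
            = (map ((LinearMap.mulLeft ℂ (1:M)) ∘ₗ (MA.act.flip m))
                (LinearMap.mulRight ℂ (a * c))) t := by
        intro t
        induction t using TensorProduct.induction_on with
        | zero => simp
        | tmul x y =>
          simp only [map_tmul, LinearMap.id_apply, LinearMap.mulRight_apply,
            LinearMap.comp_apply, LinearMap.mulLeft_apply, LinearMap.flip_apply, one_mul]
          rw [mul_assoc]
        | add u v hu hv => simp only [map_add, hu, hv]
      rw [e, KEY3 1 m (a * c), one_mul]
    have hR : CS.mul (cmk MA (m ⊗ₜ c)) (iA MA a) = cmk MA (m ⊗ₜ (c * a)) := by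
      rw [iA_apply, KEY1pure CS]
    rw [hL, hR, haC c]
  · intro u v hu hv
    simp only [map_add, LinearMap.map_add₂, LinearMap.add_apply, hu, hv]

lemma part5 (a : A) (ha : a ∈ W.AL ∩ W.AR ∩ centerSet A) :
    (∀ y : Crossed MA, CS.mul (iA MA a) y = CS.mul y (iA MA a))
      ∧ ∃ m : M, iA MA a = iM MA m := by
  obtain ⟨⟨haL, haR⟩, haC⟩ := ha
  refine ⟨part4 CS a ⟨haR, haC⟩, ⟨MA.act a 1, ?_⟩⟩
  rw [iA_apply, iM_apply]
  have h := rel (MA := MA) (1:M) a 1 haL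
  rw [one_mul, mul_one] at h
  exact h.symm

lemma part6 :
    {m : M | ∀ y : Crossed MA, CS.mul (iM MA m) y = CS.mul y (iM MA m)}
      = MA.fixed ∩ centerSet M := by
  have hiMmul : ∀ u v : M, CS.mul (iM MA u) (iM MA v) = iM MA (u * v) := by
    intro u v
    rw [iM_apply u, iM_apply v, CS.mul_def, KEY3 u v 1, iM_apply]
  ext m
  simp only [Set.mem_setOf_eq, Set.mem_inter_iff]
  constructor
  · intro hm
    have hC : m ∈ centerSet M := by
      intro m'
      apply iM_inj (MA := MA)
      rw [← hiMmul, ← hiMmul, hm (iM MA m')]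
    have hstar : ∀ (a : A) (m' : M), m' * MA.act a m = (m * m') * MA.act a 1 := by
      intro a m'
      have h := hm (cmk MA (m' ⊗ₜ a))
      have hL : CS.mul (iM MA m) (cmk MA (m' ⊗ₜ a)) = cmk MA ((m * m') ⊗ₜ a) := by
        rw [iM_apply, CS.mul_def, KEY3 m m' a]
      have hR : CS.mul (cmk MA (m' ⊗ₜ a)) (iM MA m)
          = cmk MA ((map ((LinearMap.mulLeft ℂ m') ∘ₗ (MA.act.flip m))
              (LinearMap.mulRight ℂ (1:A))) (W.Δ a)) := by
        rw [iM_apply, CS.mul_def]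
      rw [hL, hR] at h
      have h2 := congrArg (rbar MA) h
      rw [rbar_cmk] at h2
      have e : ∀ t : A ⊗[ℂ] A,
          (rbar MA) (cmk MA ((map ((LinearMap.mulLeft ℂ m') ∘ₗ (MA.act.flip m))
              (LinearMap.mulRight ℂ (1:A))) t))
            = m' * LinearMap.mul' ℂ M ((map (MA.act.flip m) (MA.act.flip 1)) t) := by
        intro t
        induction t using TensorProduct.induction_on with
        | zero => simp
        | tmul x y =>
          simp only [map_tmul, LinearMap.comp_apply, LinearMap.mulLeft_apply,
            LinearMap.mulRight_apply, LinearMap.flip_apply, LinearMap.mul'_apply, mul_one]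
          rw [rbar_cmk, mul_assoc]
        | add u v hu hv => simp only [map_add, hu, hv, mul_add]
      rw [e, show LinearMap.mul' ℂ M ((map (MA.act.flip m) (MA.act.flip 1)) (W.Δ a))
          = MA.act a (m * 1) from (MA.act_mul' a m 1).symm, mul_one] at h2
      exact h2.symm
    have hfix : m ∈ MA.fixed := by
      intro a m'
      have hpt : ∀ x : A, MA.act x m = MA.act x 1 * m := by
        intro x
        have h1 := hstar x 1
        rw [one_mul, mul_one] at h1
        rw [h1, hC (MA.act x 1)]
      have e : ∀ t : A ⊗[ℂ] A,
          LinearMap.mul' ℂ M ((map (MA.act.flip m') (MA.act.flip m)) t)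
            = LinearMap.mul' ℂ M ((map (MA.act.flip m') (MA.act.flip 1)) t) * m := by
        intro t
        induction t using TensorProduct.induction_on with
        | zero => simp
        | tmul x y =>
          simp only [map_tmul, LinearMap.mul'_apply, LinearMap.flip_apply]
          rw [hpt y, mul_assoc]
        | add u v hu hv => simp only [map_add, hu, hv, add_mul]
      rw [MA.act_mul' a m' m, e, ← MA.act_mul' a m' 1, mul_one]
    exact ⟨hfix, hC⟩
  · rintro ⟨hfix, hC⟩
    refine crossed_ind ?_ ?_ ?_
    · rw [map_zero, LinearMap.map_zero₂]
    · intro m' a'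
      have hL : CS.mul (iM MA m) (cmk MA (m' ⊗ₜ a')) = cmk MA ((m * m') ⊗ₜ a') := by
        rw [iM_apply, CS.mul_def, KEY3 m m' a']
      have hR : CS.mul (cmk MA (m' ⊗ₜ a')) (iM MA m) = cmk MA ((m * m') ⊗ₜ a') := by
        rw [iM_apply, CS.mul_def]
        have e : ∀ t : A ⊗[ℂ] A,
            (cmk MA ∘ₗ (map ((LinearMap.mulLeft ℂ m') ∘ₗ (MA.act.flip m))
                (LinearMap.mulRight ℂ (1:A)))) t
              = (cmk MA ∘ₗ (TensorProduct.mk ℂ M A (m * m')) ∘ₗ LinearMap.mul' ℂ A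
                  ∘ₗ (map W.swl LinearMap.id)) t := by
          intro t
          induction t using TensorProduct.induction_on with
          | zero => simp
          | tmul x y =>
            simp only [LinearMap.comp_apply, map_tmul, LinearMap.mulLeft_apply,
              LinearMap.mulRight_apply, LinearMap.flip_apply, LinearMap.mul'_apply,
              TensorProduct.mk_apply, LinearMap.id_apply, mul_one]
            have hx : m' * MA.act x m = (m * m') * MA.act x 1 := by
              rw [MA.fixed_actL hfix, ← hC (MA.act x 1), ← mul_assoc, hC m']
            rw [hx]
            exact T1 (m * m') x y
          | add u v hu hv => simp only [map_add, hu, hv]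
        have h := e (W.Δ a')
        simp only [LinearMap.comp_apply] at h
        rw [h, W.starL a']
        rfl
      rw [hL, hR]
    · intro u v hu hv
      simp only [map_add, LinearMap.map_add₂, LinearMap.add_apply, hu, hv]

lemma part7 : MA.fixed ∩ centerSet M
    = {n : M | n ∈ MA.fixed ∧
        ∀ y : Crossed MA, CS.mul (iM MA n) y = CS.mul y (iM MA n)} := by
  ext n
  have hiff := Set.ext_iff.mp (part6 CS) n
  simp only [Set.mem_setOf_eq, Set.mem_inter_iff] at hiff ⊢
  constructor
  · rintro ⟨h1, h2⟩
    exact ⟨h1, hiff.mpr ⟨h1, h2⟩⟩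
  · rintro ⟨h1, h2⟩
    exact hiff.mp h2

end CPR

end AuxCross


/-- Theorem 3.1 (ii)–(v) of [NSW]: relations in the crossed product `M ⋊ A`
(with multiplication `CS.mul` as provided by Theorem 3.1):
(i) `(a ▷ m) ⋊ 1 = Σ (1 ⋊ a₍₁₎)(m ⋊ 1)(1 ⋊ S(a₍₂₎))`;
(ii) `1 ⋊ a` commutes with `n ⋊ 1` for `n ∈ N = M^A`;
(iii) `1 ⋊ a` commutes with `m ⋊ 1` for `a ∈ A_R`;
(iv) `1 ⋊ a` is central for `a ∈ A_R ∩ C(A)`, and lies in `(M ⋊ 1) ∩ C(M ⋊ A)`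
for `a ∈ A_L ∩ A_R ∩ C(A)`;
(v) `{m : m ⋊ 1 central} = N ∩ C(M) = {n ∈ N : n ⋊ 1 central}`. -/
theorem crossed_product_relations
    {A M : Type} [Ring A] [Algebra ℂ A] [StarRing A] [StarModule ℂ A]
    [Ring M] [Algebra ℂ M] [StarRing M] [StarModule ℂ M]
    (W : WeakHopfAlgebra A) (MA : ModuleAlgebra W M) (CS : CrossedMul MA) :
    (∀ (a : A) (m : M),
      iM MA (MA.act a m)
        = TensorProduct.lift
            (CS.mul.compl₁₂ ((CS.mul.flip (iM MA m)) ∘ₗ iA MA) (iA MA ∘ₗ W.S)) (W.Δ a))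
    ∧ (∀ (a : A), ∀ n ∈ MA.fixed,
        CS.mul (iA MA a) (iM MA n) = CS.mul (iM MA n) (iA MA a))
    ∧ (∀ a ∈ W.AR, ∀ m : M,
        CS.mul (iA MA a) (iM MA m) = CS.mul (iM MA m) (iA MA a))
    ∧ (∀ a ∈ W.AR ∩ centerSet A, ∀ y : Crossed MA,
        CS.mul (iA MA a) y = CS.mul y (iA MA a))
    ∧ (∀ a ∈ W.AL ∩ W.AR ∩ centerSet A,
        (∀ y : Crossed MA, CS.mul (iA MA a) y = CS.mul y (iA MA a))
        ∧ ∃ m : M, iA MA a = iM MA m)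
    ∧ ({m : M | ∀ y : Crossed MA, CS.mul (iM MA m) y = CS.mul y (iM MA m)}
        = MA.fixed ∩ centerSet M)
    ∧ (MA.fixed ∩ centerSet M
        = {n : M | n ∈ MA.fixed ∧
            ∀ y : Crossed MA, CS.mul (iM MA n) y = CS.mul y (iM MA n)}) := by
  exact ⟨fun a m => CPR.part1 CS a m,
    fun a n hn => CPR.part2 CS a n hn,
    fun a ha m => CPR.part3 CS a ha m,
    fun a ha => CPR.part4 CS a ha,
    fun a ha => CPR.part5 CS a ha,
    CPR.part6 CS,
    CPR.part7 CS⟩
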